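/- arXiv:1904.06757 — 5 statements merged into one kernel-verified Lean document; each statement's English description precedes it below -/
import Mathlib

section
/- With power demand D(P) = d·(a - bP)^{1/β} (so g_k(P) = β^k·(P̄ - P) with P̄ = a/b), the unique solution of P - C = Σ_k 1'A^{k-1}1 · g_k(P) is P* = (C + P̄·B^β)/(1 + B^β), where B^β = Σ_{k=1}^n β^k·1'A^{k-1}1, and the individual price of firm i is p_i* = c_i + (B_i^β/(1 + B^β))·(P̄ - C) where B_i^β = Σ_{k=1}^n β^k·e_i'A^{k-1}1. -/
/-!
Every `g_k(P) = β^k (P̄ - P)` carries the common factor `P̄ - P`, so the equilibrium equation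
collapses to the linear equation `P - C = B^β (P̄ - P)`, and firm `i`'s markup to
`B_i^β (P̄ - P*)`. Path counts of a `0/1` matrix are nonnegative, hence `1 + B^β > 0` and the
linear equation has exactly one root.
-/

open Finset

theorem sum_mul_pow_mul_eq {R : Type*} [CommSemiring R] (s : Finset ℕ) (w : ℕ → R) (β x : R) :
    ∑ k ∈ s, w k * (β ^ k * x) = (∑ k ∈ s, β ^ k * w k) * x := by
  rw [sum_mul]
  exact sum_congr rfl fun k _ => by ring

theorem sum_pow_mul_sum_pow_apply_nonneg {ι R : Type*} [Fintype ι] [DecidableEq ι]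
    [CommSemiring R] [PartialOrder R] [IsOrderedRing R] {A : Matrix ι ι R}
    (hA : ∀ i j, 0 ≤ A i j) {β : R} (hβ : 0 ≤ β) (s : Finset ℕ) :
    0 ≤ ∑ k ∈ s, β ^ k * ∑ i, ∑ j, (A ^ (k - 1)) i j :=
  sum_nonneg fun k _ => mul_nonneg (pow_nonneg hβ k) <|
    sum_nonneg fun i _ => sum_nonneg fun j _ => Matrix.pow_apply_nonneg hA _ i j

theorem sub_eq_mul_sub_iff_eq_div {K : Type*} [Field K] {B C Pbar P : K} (hB : 1 + B ≠ 0) :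
    P - C = B * (Pbar - P) ↔ P = (C + Pbar * B) / (1 + B) := by
  rw [eq_div_iff hB]
  constructor <;> intro h <;> linear_combination h

theorem sub_div_one_add_eq {K : Type*} [Field K] {B C Pbar : K} (hB : 1 + B ≠ 0) :
    Pbar - (C + Pbar * B) / (1 + B) = (Pbar - C) / (1 + B) := by
  field_simp
  ring

theorem power_demand_equilibrium_general
    (n : ℕ) (A : Matrix (Fin n) (Fin n) ℝ)
    (h01 : ∀ i j, A i j = 0 ∨ A i j = 1)
    (β Pbar C : ℝ) (hβ : 0 < β)
    (c : Fin n → ℝ)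
    (Bβ : ℝ) (hBβ : Bβ = ∑ k ∈ Finset.Icc 1 n, β ^ k * ∑ i, ∑ j, (A ^ (k - 1)) i j)
    (Bi : Fin n → ℝ)
    (hBi : ∀ i, Bi i = ∑ k ∈ Finset.Icc 1 n, β ^ k * ∑ j, (A ^ (k - 1)) i j)
    (Pstar : ℝ) (hPstar : Pstar = (C + Pbar * Bβ) / (1 + Bβ)) :
    (Pstar - C = ∑ k ∈ Finset.Icc 1 n,
        (∑ i, ∑ j, (A ^ (k - 1)) i j) * (β ^ k * (Pbar - Pstar))) ∧
    (∀ P : ℝ, P - C = ∑ k ∈ Finset.Icc 1 n,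
        (∑ i, ∑ j, (A ^ (k - 1)) i j) * (β ^ k * (Pbar - P)) → P = Pstar) ∧
    (∀ i : Fin n,
      c i + ∑ k ∈ Finset.Icc 1 n,
          (∑ j, (A ^ (k - 1)) i j) * (β ^ k * (Pbar - Pstar))
        = c i + (Bi i / (1 + Bβ)) * (Pbar - C)) := by
  have hA : ∀ i j, 0 ≤ A i j := fun i j => (h01 i j).elim (·.ge) (· ▸ zero_le_one)
  have hden : 1 + Bβ ≠ 0 := by
    have := hBβ ▸ sum_pow_mul_sum_pow_apply_nonneg hA hβ.le (Icc 1 n)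
    positivity
  have haggregate (P : ℝ) : ∑ k ∈ Icc 1 n,
      (∑ i, ∑ j, (A ^ (k - 1)) i j) * (β ^ k * (Pbar - P)) = Bβ * (Pbar - P) := by
    rw [sum_mul_pow_mul_eq, hBβ]
  refine ⟨?_, fun P hP => ?_, fun i => ?_⟩
  · rw [haggregate]
    exact (sub_eq_mul_sub_iff_eq_div hden).2 hPstar
  · rw [haggregate] at hP
    exact hPstar ▸ (sub_eq_mul_sub_iff_eq_div hden).1 hP
  · rw [sum_mul_pow_mul_eq, ← hBi, hPstar, sub_div_one_add_eq hden, mul_div_assoc']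
    ring

/-- With power demand (g_k(P) = β^k (P̄ - P)), the unique solution
of P - C = Σ_k (1'A^{k-1}1) g_k(P) is P* = (C + P̄ B^β)/(1 + B^β), where
B^β = Σ_{k=1}^n β^k 1'A^{k-1}1, and the individual price of firm i is
p_i* = c_i + (B_i^β/(1 + B^β))(P̄ - C), B_i^β = Σ_k β^k e_i'A^{k-1}1. -/
theorem power_demand_equilibrium
    (n : ℕ) (hn : 1 ≤ n) (A : Matrix (Fin n) (Fin n) ℝ)
    (h01 : ∀ i j, A i j = 0 ∨ A i j = 1)
    (β Pbar C : ℝ) (hβ : 0 < β) (hC : 0 ≤ C) (hCP : C < Pbar)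
    (c : Fin n → ℝ)
    (Bβ : ℝ) (hBβ : Bβ = ∑ k ∈ Finset.Icc 1 n, β ^ k * ∑ i, ∑ j, (A ^ (k - 1)) i j)
    (Bi : Fin n → ℝ)
    (hBi : ∀ i, Bi i = ∑ k ∈ Finset.Icc 1 n, β ^ k * ∑ j, (A ^ (k - 1)) i j)
    (Pstar : ℝ) (hPstar : Pstar = (C + Pbar * Bβ) / (1 + Bβ)) :
    (Pstar - C = ∑ k ∈ Finset.Icc 1 n,
        (∑ i, ∑ j, (A ^ (k - 1)) i j) * (β ^ k * (Pbar - Pstar))) ∧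
    (∀ P : ℝ, P - C = ∑ k ∈ Finset.Icc 1 n,
        (∑ i, ∑ j, (A ^ (k - 1)) i j) * (β ^ k * (Pbar - P)) → P = Pstar) ∧
    (∀ i : Fin n,
      c i + ∑ k ∈ Finset.Icc 1 n,
          (∑ j, (A ^ (k - 1)) i j) * (β ^ k * (Pbar - Pstar))
        = c i + (Bi i / (1 + Bβ)) * (Pbar - C)) :=
  power_demand_equilibrium_general n A h01 β Pbar C hβ c Bβ hBβ Bi hBi Pstar hPstar
end

section
/- Suppose g₁, ..., g_n: (0, P̄) → ℝ are nonnegative weakly decreasing functions with g₁ strictly decreasing, and C ≥ 0. If weights (w_k) and (v_k) of two networks satisfy w_k ≥ v_k for all k and w_j > v_j for some j with g_j > 0, then the unique solutions P_A of P - C = Σ_k w_k g_k(P) and P_B of P - C = Σ_k v_k g_k(P) satisfy P_A ≥ P_B, with strict inequality if g_j(P_B) > 0. (Magnified multiple-marginalization: more influences raise the final price.) -/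
/-! The right-hand side `∑ w k * g k P` grows with the weights and falls with `P`, while the
left-hand side `P - C` rises with `P`; so raising the weights can only move the crossing point up,
and strictly so once a raised weight meets a positive `g j` at the old crossing point. -/

section WeightedSums

variable {ι : Type*} {s : Finset ι} {v w : ι → ℝ}

theorem sum_mul_le_sum_mul_of_antitoneOn {S : Set ℝ} {f : ι → ℝ → ℝ}
    (hf0 : ∀ k ∈ s, ∀ x ∈ S, 0 ≤ f k x) (hf : ∀ k ∈ s, AntitoneOn (f k) S)
    (hv : ∀ k ∈ s, 0 ≤ v k) (hvw : ∀ k ∈ s, v k ≤ w k)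
    {x y : ℝ} (hx : x ∈ S) (hy : y ∈ S) (hxy : x ≤ y) :
    ∑ k ∈ s, v k * f k y ≤ ∑ k ∈ s, w k * f k x :=
  Finset.sum_le_sum fun k hk =>
    calc v k * f k y ≤ v k * f k x := mul_le_mul_of_nonneg_left (hf k hk hx hy hxy) (hv k hk)
      _ ≤ w k * f k x := mul_le_mul_of_nonneg_right (hvw k hk) (hf0 k hk x hx)

theorem sum_mul_lt_sum_mul_of_lt {a : ι → ℝ} (ha : ∀ k ∈ s, 0 ≤ a k)
    (hvw : ∀ k ∈ s, v k ≤ w k) {j : ι} (hj : j ∈ s) (hvj : v j < w j) (haj : 0 < a j) :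
    ∑ k ∈ s, v k * a k < ∑ k ∈ s, w k * a k :=
  Finset.sum_lt_sum (fun k hk => mul_le_mul_of_nonneg_right (hvw k hk) (ha k hk))
    ⟨j, hj, mul_lt_mul_of_pos_right hvj haj⟩

end WeightedSums

theorem magnified_marginalization_general
    (Pbar : ℝ) (n : ℕ)
    (gs : ℕ → ℝ → ℝ)
    (hpos : ∀ k ∈ Finset.Icc 1 n, ∀ P ∈ Set.Ioo (0 : ℝ) Pbar, 0 ≤ gs k P)
    (hanti : ∀ k ∈ Finset.Icc 1 n, AntitoneOn (gs k) (Set.Ioo (0 : ℝ) Pbar))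
    (C : ℝ)
    (w v : ℕ → ℝ)
    (hwpos : ∀ k, 0 ≤ v k) (hwv : ∀ k, v k ≤ w k)
    (PA PB : ℝ) (hPAmem : PA ∈ Set.Ioo (0 : ℝ) Pbar) (hPBmem : PB ∈ Set.Ioo (0 : ℝ) Pbar)
    (hPA : PA - C = ∑ k ∈ Finset.Icc 1 n, w k * gs k PA)
    (hPB : PB - C = ∑ k ∈ Finset.Icc 1 n, v k * gs k PB) :
    PB ≤ PA ∧
    (∀ j ∈ Finset.Icc 1 n, v j < w j → 0 < gs j PB → PB < PA) := by
  have hle : PB ≤ PA := by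
    by_contra! hlt
    have := sum_mul_le_sum_mul_of_antitoneOn hpos hanti (fun k _ => hwpos k) (fun k _ => hwv k)
      hPAmem hPBmem hlt.le
    linarith
  refine ⟨hle, fun j hj hvj hgj => hle.lt_of_ne fun heq => ?_⟩
  have := sum_mul_lt_sum_mul_of_lt (fun k hk => hpos k hk PB hPBmem) (fun k _ => hwv k) hj hvj hgj
  rw [← heq] at hPA
  linarith

/-- Magnified multiple-marginalization: with g_k nonnegative
weakly decreasing on (0, P̄), g₁ strictly decreasing, C ≥ 0, and network
weights w ≥ v pointwise, the unique solutions P_A, P_B of the respective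
fixed-point equations satisfy P_A ≥ P_B, strictly if w_j > v_j at some j with
g_j(P_B) > 0. -/
theorem magnified_marginalization
    (Pbar : ℝ) (hPbar : 0 < Pbar) (n : ℕ) (hn : 1 ≤ n)
    (gs : ℕ → ℝ → ℝ)
    (hpos : ∀ k ∈ Finset.Icc 1 n, ∀ P ∈ Set.Ioo (0 : ℝ) Pbar, 0 ≤ gs k P)
    (hanti : ∀ k ∈ Finset.Icc 1 n, AntitoneOn (gs k) (Set.Ioo (0 : ℝ) Pbar))
    (hstrict : StrictAntiOn (gs 1) (Set.Ioo (0 : ℝ) Pbar))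
    (C : ℝ) (hC : 0 ≤ C)
    (w v : ℕ → ℝ)
    (hwpos : ∀ k, 0 ≤ v k) (hwv : ∀ k, v k ≤ w k)
    (PA PB : ℝ) (hPAmem : PA ∈ Set.Ioo (0 : ℝ) Pbar) (hPBmem : PB ∈ Set.Ioo (0 : ℝ) Pbar)
    (hPA : PA - C = ∑ k ∈ Finset.Icc 1 n, w k * gs k PA)
    (hPB : PB - C = ∑ k ∈ Finset.Icc 1 n, v k * gs k PB) :
    PB ≤ PA ∧
    (∀ j ∈ Finset.Icc 1 n, v j < w j → 0 < gs j PB → PB < PA) :=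
  magnified_marginalization_general Pbar n gs hpos hanti C w v hwpos hwv PA PB hPAmem hPBmem hPA hPB
end

section
/- Let A be the adjacency matrix of an acyclic directed graph on n vertices, and let g_k(P*) ≥ 0 for all k. If e_i'A^{k-1}1 ≥ e_j'A^{k-1}1 for all k = 1,...,n with strict inequality for some k at which g_k(P*) > 0, then I_i(A) > I_j(A). In particular, if a_{ij} = 1 (i influences j) and A is transitive (A ≥ A² entrywise), then e_i'A^{k-1}1 ≥ e_j'A^{k-1}1 for all k with strict inequality at k = 2, hence I_i(A) > I_j(A) whenever g₂(P*) > 0. -/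
/-!
If `a_ij = 1`, transitivity makes row `i` of `A` dominate row `j` entrywise:
`a_jl = a_ij a_jl ≤ (A²)_il ≤ a_il`. As `A ≥ 0`, this propagates through `A^(m+1) = A · A^m`
to every power, and `a_jj = 0 < 1 = a_ij` makes the row sums differ strictly at `k = 2`.
Influentiality is a nonnegatively weighted sum of these row sums, so termwise dominance that is
strict at one positively weighted term gives `I_j < I_i`.
-/

open Finset

theorem Finset.sum_mul_lt_sum_mul_of_le_of_exists_lt {ι R : Type*} [Semiring R] [PartialOrder R]
    [IsStrictOrderedRing R] {s : Finset ι} {f g w : ι → R} (hw : ∀ k ∈ s, 0 ≤ w k)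
    (hle : ∀ k ∈ s, f k ≤ g k) (hlt : ∃ k ∈ s, f k < g k ∧ 0 < w k) :
    ∑ k ∈ s, f k * w k < ∑ k ∈ s, g k * w k := by
  obtain ⟨k, hk, hfg, hwk⟩ := hlt
  exact sum_lt_sum (fun k hk => mul_le_mul_of_nonneg_right (hle k hk) (hw k hk))
    ⟨k, hk, mul_lt_mul_of_pos_right hfg hwk⟩

namespace Matrix

variable {ι R : Type*} [Fintype ι] [DecidableEq ι] [Semiring R] [PartialOrder R]
  [IsOrderedRing R] {A : Matrix ι ι R}

omit [DecidableEq ι] in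
theorem apply_le_apply_of_mul_self_le (hA : ∀ p q, 0 ≤ A p q) (htrans : ∀ p q, (A * A) p q ≤ A p q)
    {i j : ι} (hij : A i j = 1) (l : ι) : A j l ≤ A i l :=
  calc A j l = A i j * A j l := by rw [hij, one_mul]
    _ ≤ (A * A) i l :=
      single_le_sum (f := fun r => A i r * A r l) (fun r _ => mul_nonneg (hA i r) (hA r l))
        (mem_univ j)
    _ ≤ A i l := htrans i l

theorem pow_apply_le_pow_apply_of_row_le (hA : ∀ p q, 0 ≤ A p q) {i j : ι}
    (hrow : ∀ l, A j l ≤ A i l) (m : ℕ) (l : ι) : (A ^ (m + 1)) j l ≤ (A ^ (m + 1)) i l := by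
  rw [pow_succ', mul_apply, mul_apply]
  exact sum_le_sum fun q _ => mul_le_mul_of_nonneg_right (hrow q) (pow_apply_nonneg hA m q l)

theorem sum_pow_apply_le_of_row_le (hA : ∀ p q, 0 ≤ A p q) {i j : ι}
    (hrow : ∀ l, A j l ≤ A i l) : ∀ m : ℕ, ∑ l, (A ^ m) j l ≤ ∑ l, (A ^ m) i l
  | 0 => by simp [one_apply]
  | m + 1 => sum_le_sum fun l _ => pow_apply_le_pow_apply_of_row_le hA hrow m l

end Matrix

theorem influentiality_dominance_general
    (n : ℕ) (A : Matrix (Fin n) (Fin n) ℝ)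
    (h01 : ∀ i j, A i j = 0 ∨ A i j = 1)
    (hdiag : ∀ i, A i i = 0)
    (htrans : ∀ i j, (A * A) i j ≤ A i j)
    (g : ℕ → ℝ) (hg : ∀ k, 0 ≤ g k)
    (I : Fin n → ℝ)
    (hI : ∀ i, I i = ∑ k ∈ Finset.Icc 1 n, (∑ j, (A ^ (k - 1)) i j) * g k) :
    (∀ i j : Fin n,
      (∀ k ∈ Finset.Icc 1 n,
        (∑ l, (A ^ (k - 1)) j l) ≤ ∑ l, (A ^ (k - 1)) i l) →
      (∃ k ∈ Finset.Icc 1 n,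
        (∑ l, (A ^ (k - 1)) j l) < (∑ l, (A ^ (k - 1)) i l) ∧ 0 < g k) →
      I j < I i) ∧
    (∀ i j : Fin n, A i j = 1 →
      (∀ k ∈ Finset.Icc 1 n,
        (∑ l, (A ^ (k - 1)) j l) ≤ ∑ l, (A ^ (k - 1)) i l) ∧
      (∑ l, (A ^ (2 - 1)) j l) < (∑ l, (A ^ (2 - 1)) i l) ∧
      (0 < g 2 → I j < I i)) := by
  have dominance : ∀ i j : Fin n,
      (∀ k ∈ Icc 1 n, (∑ l, (A ^ (k - 1)) j l) ≤ ∑ l, (A ^ (k - 1)) i l) →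
      (∃ k ∈ Icc 1 n, (∑ l, (A ^ (k - 1)) j l) < (∑ l, (A ^ (k - 1)) i l) ∧ 0 < g k) →
      I j < I i := fun i j hle hlt => by
    rw [hI i, hI j]
    exact sum_mul_lt_sum_mul_of_le_of_exists_lt (fun k _ => hg k) hle hlt
  refine ⟨dominance, fun i j hij => ?_⟩
  have hA : ∀ p q, 0 ≤ A p q := fun p q => by rcases h01 p q with h | h <;> simp [h]
  have hrow := Matrix.apply_le_apply_of_mul_self_le hA htrans hij
  have hle : ∀ k ∈ Icc 1 n, (∑ l, (A ^ (k - 1)) j l) ≤ ∑ l, (A ^ (k - 1)) i l :=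
    fun k _ => Matrix.sum_pow_apply_le_of_row_le hA hrow (k - 1)
  have hlt : (∑ l, (A ^ (2 - 1)) j l) < (∑ l, (A ^ (2 - 1)) i l) := by
    rw [show 2 - 1 = 1 from rfl, pow_one]
    refine sum_lt_sum (fun l _ => hrow l) ⟨j, mem_univ j, ?_⟩
    rw [hdiag j, hij]
    exact one_pos
  have hn : 1 < n := by
    have hne : i ≠ j := fun h => by simp [h, hdiag] at hij
    simpa using Fintype.one_lt_card_iff_nontrivial.mpr ⟨⟨i, j, hne⟩⟩
  exact ⟨hle, hlt, fun hg2 => dominance i j hle ⟨2, mem_Icc.mpr ⟨one_le_two, hn⟩, hlt, hg2⟩⟩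

/-- For an acyclic transitive 0-1 adjacency matrix A and
nonnegative weights g_k(P*): dominance of path counts of i over j (strict at
some k with positive weight) implies I_i(A) > I_j(A); and if i influences j
then i's path counts dominate j's with strict inequality at k = 2, hence
I_i(A) > I_j(A) whenever g₂(P*) > 0. -/
theorem influentiality_dominance
    (n : ℕ) (A : Matrix (Fin n) (Fin n) ℝ)
    (h01 : ∀ i j, A i j = 0 ∨ A i j = 1)
    (hdiag : ∀ i, A i i = 0)
    (hacyc : A ^ n = 0)
    (htrans : ∀ i j, (A * A) i j ≤ A i j)
    (g : ℕ → ℝ) (hg : ∀ k, 0 ≤ g k)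
    (I : Fin n → ℝ)
    (hI : ∀ i, I i = ∑ k ∈ Finset.Icc 1 n, (∑ j, (A ^ (k - 1)) i j) * g k) :
    (∀ i j : Fin n,
      (∀ k ∈ Finset.Icc 1 n,
        (∑ l, (A ^ (k - 1)) j l) ≤ ∑ l, (A ^ (k - 1)) i l) →
      (∃ k ∈ Finset.Icc 1 n,
        (∑ l, (A ^ (k - 1)) j l) < (∑ l, (A ^ (k - 1)) i l) ∧ 0 < g k) →
      I j < I i) ∧
    (∀ i j : Fin n, A i j = 1 →
      (∀ k ∈ Finset.Icc 1 n,
        (∑ l, (A ^ (k - 1)) j l) ≤ ∑ l, (A ^ (k - 1)) i l) ∧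
      (∑ l, (A ^ (2 - 1)) j l) < (∑ l, (A ^ (2 - 1)) i l) ∧
      (0 < g 2 → I j < I i)) :=
  influentiality_dominance_general n A h01 hdiag htrans g hg I hI
end

section
/- For the demand function D(P) = d·e^{√(2(a - bP))/b} with d, a, b > 0, defined for P < a/b, the function g(P) = -D(P)/D'(P) equals √(2(a - bP)), and the recursion g₂(P) = -g₁'(P)·g(P) yields g₂(P) = b and g_k(P) = 0 for all k > 2. Hence the influentiality I_i(A) = √(2(a - bP*)) + b·(e_i'A·1) is an affine function of the out-degree of vertex i. -/
/-!
On `P < a / b` put `s P = √(2(a - bP))`, so that `s' = -b / s` and `D = d·exp(s / b)`.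
For any `D = d·exp f` one has `-D / D' = -1 / f'`, which here gives `g = s`. Then
`g₂ = -s'·s = b` is constant on the open half-line, so its derivative vanishes there and every
later `g_k` is `0`. Only the terms `k = 1, 2` survive in the influentiality, with weights `1` and
the out-degree.
-/

open Set

lemma hasDerivAt_sqrt_two_mul_sub {a b P : ℝ} (hP : b * P < a) :
    HasDerivAt (fun P => √(2 * (a - b * P))) (-b / √(2 * (a - b * P))) P := by
  have hpos : 0 < 2 * (a - b * P) := by linarith
  have h := (((hasDerivAt_id P).const_mul b).const_sub a).const_mul 2 |>.sqrt hpos.ne'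
  simp only [id, mul_one] at h
  convert h using 1
  have : √(2 * (a - b * P)) ≠ 0 := (Real.sqrt_pos.mpr hpos).ne'
  field_simp

lemma neg_div_deriv_const_mul_exp {f : ℝ → ℝ} {f' x d : ℝ} (hd : d ≠ 0)
    (hf : HasDerivAt f f' x) :
    -(d * Real.exp (f x)) / deriv (fun y => d * Real.exp (f y)) x = -1 / f' := by
  rw [(hf.exp.const_mul d).deriv]
  rcases eq_or_ne f' 0 with rfl | hf'
  · simp
  · field_simp

lemma eqOn_neg_deriv_mul_zero_of_eqOn_const {U : Set ℝ} (hU : IsOpen U) {f : ℝ → ℝ} {c : ℝ}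
    (hf : EqOn f (fun _ => c) U) (g : ℝ → ℝ) :
    EqOn (fun P => -(deriv f P) * g P) 0 U := by
  intro P hP
  simp [hf.deriv hU hP]

lemma eqOn_zero_of_eqOn_const_two {U : Set ℝ} (hU : IsOpen U) {g : ℝ → ℝ}
    {gs : ℕ → ℝ → ℝ} (hrec : ∀ k : ℕ, 2 ≤ k → gs (k + 1) = fun P => -(deriv (gs k) P) * g P)
    {c : ℝ} (h2 : EqOn (gs 2) (fun _ => c) U) :
    ∀ k : ℕ, 2 < k → EqOn (gs k) 0 U := by
  intro k hk
  induction k, hk using Nat.le_induction with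
  | base => exact hrec 2 le_rfl ▸ eqOn_neg_deriv_mul_zero_of_eqOn_const hU h2 g
  | succ k hk ih =>
    exact hrec k (by omega) ▸ eqOn_neg_deriv_mul_zero_of_eqOn_const hU ih g

lemma Finset.sum_Icc_one_eq_add_of_eq_zero {M : Type*} [AddCommMonoid M] {f : ℕ → M} {n : ℕ}
    (hn : 2 ≤ n) (hf : ∀ k, 2 < k → f k = 0) :
    ∑ k ∈ Finset.Icc 1 n, f k = f 1 + f 2 := by
  rw [← Finset.sum_pair (by norm_num : (1 : ℕ) ≠ 2)]
  refine (Finset.sum_subset (fun k hk => ?_) fun k hk hk' => hf k ?_).symm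
  · simp only [Finset.mem_insert, Finset.mem_singleton] at hk
    simp only [Finset.mem_Icc]
    omega
  · simp only [Finset.mem_Icc, Finset.mem_insert, Finset.mem_singleton] at hk hk'
    omega

theorem degree_centrality_demand_general
    (d a b : ℝ) (hd : 0 < d) (hb : 0 < b)
    (D g : ℝ → ℝ)
    (hD : D = fun P => d * Real.exp (Real.sqrt (2 * (a - b * P)) / b))
    (hg : g = fun P => -D P / deriv D P)
    (gs : ℕ → ℝ → ℝ)
    (hgs1 : gs 1 = g)
    (hgsrec : ∀ k : ℕ, 1 ≤ k → gs (k + 1) = fun P => -(deriv (gs k) P) * g P)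
    (n : ℕ) (hn : 2 ≤ n) (A : Matrix (Fin n) (Fin n) ℝ) :
    (∀ P ∈ Set.Ioo (0 : ℝ) (a / b),
      gs 1 P = Real.sqrt (2 * (a - b * P)) ∧
      gs 2 P = b ∧
      ∀ k : ℕ, 2 < k → gs k P = 0) ∧
    (∀ Pstar ∈ Set.Ioo (0 : ℝ) (a / b), ∀ i : Fin n,
      ∑ k ∈ Finset.Icc 1 n, (∑ j, (A ^ (k - 1)) i j) * gs k Pstar
        = Real.sqrt (2 * (a - b * Pstar)) + b * ∑ j, A i j) := by
  set s : ℝ → ℝ := fun P => √(2 * (a - b * P))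
  have hs' : ∀ P ∈ Iio (a / b), HasDerivAt s (-b / s P) P := fun P hP =>
    hasDerivAt_sqrt_two_mul_sub (by rwa [mem_Iio, lt_div_iff₀ hb, mul_comm] at hP)
  have hs_ne : ∀ P ∈ Iio (a / b), s P ≠ 0 := fun P hP => by
    rw [mem_Iio, lt_div_iff₀ hb] at hP
    exact (Real.sqrt_pos.mpr (by linarith)).ne'
  have hg1 : EqOn (gs 1) s (Iio (a / b)) := fun P hP => by
    rw [hgs1, hg, hD]
    simp only
    rw [neg_div_deriv_const_mul_exp hd.ne' ((hs' P hP).div_const b)]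
    field_simp [hs_ne P hP]
  have hg2 : EqOn (gs 2) (fun _ => b) (Iio (a / b)) := fun P hP => by
    rw [hgsrec 1 le_rfl, ← hgs1]
    simp only
    rw [hg1.deriv isOpen_Iio hP, (hs' P hP).deriv, hg1 hP]
    field_simp [hs_ne P hP]
  have hgk := eqOn_zero_of_eqOn_const_two isOpen_Iio (fun k hk => hgsrec k (by omega)) hg2
  refine ⟨fun P hP => ⟨hg1 hP.2, hg2 hP.2, fun k hk => hgk k hk hP.2⟩, fun P hP i => ?_⟩
  have hvanish : ∀ k, 2 < k → (∑ j, (A ^ (k - 1)) i j) * gs k P = 0 := fun k hk => by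
    rw [hgk k hk hP.2, Pi.zero_apply, mul_zero]
  rw [Finset.sum_Icc_one_eq_add_of_eq_zero hn hvanish, hg1 hP.2, hg2 hP.2]
  simp only [Nat.sub_self, pow_zero, Matrix.one_apply, Finset.sum_ite_eq, Finset.mem_univ,
    if_true, one_mul, Nat.reduceSub, pow_one]
  ring

/-- For D(P) = d e^{√(2(a - bP))/b} on (0, a/b) with d, a, b > 0,
g(P) = -D(P)/D'(P) equals √(2(a - bP)), g₂ ≡ b and g_k ≡ 0 for k > 2 on the
domain; hence the influentiality I_i(A) = √(2(a - bP*)) + b·(out-degree of i)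
is affine in the out-degree. -/
theorem degree_centrality_demand
    (d a b : ℝ) (hd : 0 < d) (ha : 0 < a) (hb : 0 < b)
    (D g : ℝ → ℝ)
    (hD : D = fun P => d * Real.exp (Real.sqrt (2 * (a - b * P)) / b))
    (hg : g = fun P => -D P / deriv D P)
    (gs : ℕ → ℝ → ℝ)
    (hgs1 : gs 1 = g)
    (hgsrec : ∀ k : ℕ, 1 ≤ k → gs (k + 1) = fun P => -(deriv (gs k) P) * g P)
    (n : ℕ) (hn : 2 ≤ n) (A : Matrix (Fin n) (Fin n) ℝ)
    (h01 : ∀ i j, A i j = 0 ∨ A i j = 1) :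
    (∀ P ∈ Set.Ioo (0 : ℝ) (a / b),
      gs 1 P = Real.sqrt (2 * (a - b * P)) ∧
      gs 2 P = b ∧
      ∀ k : ℕ, 2 < k → gs k P = 0) ∧
    (∀ Pstar ∈ Set.Ioo (0 : ℝ) (a / b), ∀ i : Fin n,
      ∑ k ∈ Finset.Icc 1 n, (∑ j, (A ^ (k - 1)) i j) * gs k Pstar
        = Real.sqrt (2 * (a - b * Pstar)) + b * ∑ j, A i j) :=
  degree_centrality_demand_general d a b hd hb D g hD hg gs hgs1 hgsrec n hn A
end

section
/- In the two-firm sequential game with demand D(P) and g(P) = -D(P)/D'(P), zero costs: if firm 2 best-responds to the total price via p₂ = f₂(P) = g(P), and firm 1 maximizes (P - f₂(P))·D(P), then firm 1's first-order condition gives p₁ = f₁(P) = g(P)(1 - g'(P)), so the equilibrium total price satisfies P* = 2g(P*) - g'(P*)·g(P*). For logit demand D(P) = e^{-P}/(1 + e^{-P}), this means P* solves P = 2(1 + e^{-P}) + e^{-P}(1 + e^{-P}). -/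
/-! Since `D' ≠ 0`, the definition of `g` reads `g · D' = -D`; substituting this turns both
first-order conditions into `(markup - formula) · D' = 0`. For logit demand `D' = -D (1 - D)`, so
`g = 1 / (1 - D) = 1 + e^{-P}` and `g' = -e^{-P}`. -/

open Real

section Markups

variable {D g : ℝ → ℝ} {P : ℝ}

theorem mul_deriv_eq_neg_of_eq_div_deriv (hg : g = fun P => -D P / deriv D P)
    (hD' : deriv D P ≠ 0) : g P * deriv D P = -D P := by
  rw [hg]
  exact div_mul_cancel₀ _ hD'

theorem eq_of_follower_foc (hg : g = fun P => -D P / deriv D P) (hD' : deriv D P ≠ 0)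
    {p₂ : ℝ} (hfoc : D P + p₂ * deriv D P = 0) : p₂ = g P :=
  mul_right_cancel₀ hD' <| by
    linear_combination hfoc - mul_deriv_eq_neg_of_eq_div_deriv hg hD'

theorem sub_eq_of_leader_foc (hg : g = fun P => -D P / deriv D P) (hD' : deriv D P ≠ 0)
    (hfoc : (1 - deriv g P) * D P + (P - g P) * deriv D P = 0) :
    P - g P = g P * (1 - deriv g P) :=
  mul_right_cancel₀ hD' <| by
    linear_combination hfoc - (1 - deriv g P) * mul_deriv_eq_neg_of_eq_div_deriv hg hD'

end Markups

section Logit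

noncomputable def logitDemand (P : ℝ) : ℝ := exp (-P) / (1 + exp (-P))

theorem hasDerivAt_one_add_exp_neg (P : ℝ) :
    HasDerivAt (fun P => 1 + exp (-P)) (-exp (-P)) P := by
  simpa using ((hasDerivAt_neg P).exp).const_add 1

theorem hasDerivAt_logitDemand (P : ℝ) :
    HasDerivAt logitDemand (-exp (-P) / (1 + exp (-P)) ^ 2) P := by
  have hden : 1 + exp (-P) ≠ 0 := by positivity
  refine (((hasDerivAt_neg P).exp).div (hasDerivAt_one_add_exp_neg P) hden).congr_deriv ?_
  ring

theorem neg_logitDemand_div_deriv :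
    (fun P => -logitDemand P / deriv logitDemand P) = fun P => 1 + exp (-P) := by
  funext P
  have hden : 1 + exp (-P) ≠ 0 := by positivity
  rw [(hasDerivAt_logitDemand P).deriv, logitDemand]
  field_simp [(exp_pos (-P)).ne']

end Logit

theorem two_firm_sequential_general
    (D g : ℝ → ℝ)
    (hD' : ∀ P : ℝ, deriv D P < 0)
    (hg : g = fun P => -D P / deriv D P) :
    (∀ P p₂ : ℝ, D P + p₂ * deriv D P = 0 → p₂ = g P) ∧
    (∀ P p₁ : ℝ, (1 - deriv g P) * D P + (P - g P) * deriv D P = 0 →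
      p₁ = P - g P →
      p₁ = g P * (1 - deriv g P) ∧ P = 2 * g P - deriv g P * g P) ∧
    ((D = fun P => Real.exp (-P) / (1 + Real.exp (-P))) →
      ∀ P : ℝ,
        (P = 2 * g P - deriv g P * g P ↔
          P = 2 * (1 + Real.exp (-P)) + Real.exp (-P) * (1 + Real.exp (-P)))) := by
  refine ⟨fun P p₂ => eq_of_follower_foc hg (hD' P).ne, fun P p₁ hfoc hp₁ => ?_, ?_⟩
  · have hmarkup := sub_eq_of_leader_foc hg (hD' P).ne hfoc
    exact ⟨hp₁.trans hmarkup, by linarith⟩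
  · rintro rfl P
    have hg_logit : g = fun P => 1 + exp (-P) := hg.trans neg_logitDemand_div_deriv
    have hderiv : deriv g P = -exp (-P) := hg_logit ▸ (hasDerivAt_one_add_exp_neg P).deriv
    rw [hderiv, hg_logit, neg_mul, sub_neg_eq_add]

/-- Two-firm sequential game with zero costs. With demand D
strictly decreasing, positive, differentiable and g(P) = -D(P)/D'(P):
(i) firm 2's FOC D(P) + p₂D'(P) = 0 gives p₂ = f₂(P) = g(P);
(ii) firm 1's FOC (1 - g'(P))D(P) + (P - g(P))D'(P) = 0 gives
p₁ = P - g(P) = g(P)(1 - g'(P)), so the equilibrium total price satisfies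
P* = 2g(P*) - g'(P*)g(P*);
(iii) for logit demand D(P) = e^{-P}/(1 + e^{-P}) this equation reads
P = 2(1 + e^{-P}) + e^{-P}(1 + e^{-P}). -/
theorem two_firm_sequential
    (D g : ℝ → ℝ)
    (hdiff : Differentiable ℝ D)
    (hD' : ∀ P : ℝ, deriv D P < 0)
    (hpos : ∀ P : ℝ, 0 < D P)
    (hg : g = fun P => -D P / deriv D P)
    (hgdiff : Differentiable ℝ g) :
    (∀ P p₂ : ℝ, D P + p₂ * deriv D P = 0 → p₂ = g P) ∧
    (∀ P p₁ : ℝ, (1 - deriv g P) * D P + (P - g P) * deriv D P = 0 →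
      p₁ = P - g P →
      p₁ = g P * (1 - deriv g P) ∧ P = 2 * g P - deriv g P * g P) ∧
    ((D = fun P => Real.exp (-P) / (1 + Real.exp (-P))) →
      ∀ P : ℝ,
        (P = 2 * g P - deriv g P * g P ↔
          P = 2 * (1 + Real.exp (-P)) + Real.exp (-P) * (1 + Real.exp (-P)))) :=
  two_firm_sequential_general D g hD' hg
end
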